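/- Let k > 0 and 0 < w < 1. Then for every x > 0, (1/(2π)) ∫_ℝ x^(w+iλ) · k^(-(w-1+iλ)) / ((w+iλ)(w-1+iλ)) dλ = max(x - k, 0) - x, which also equals max(k - x, 0) - k. -/

import Mathlib

open Complex MeasureTheory

open Set in
private lemma payoff_integrableOn (k : ℝ) (hk : 0 < k) {s : ℂ} (hs0 : 0 < s.re) (hs1 : s.re < 1) :
    IntegrableOn (fun u : ℝ => (u : ℂ) ^ (s - 1) • (-((min u⁻¹ k : ℝ) : ℂ))) (Ioi 0) := by
  have hc : (0:ℝ) < k⁻¹ := inv_pos.mpr hk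
  have h1 : IntegrableOn (fun u : ℝ => (u : ℂ) ^ (s - 1) • (-((min u⁻¹ k : ℝ) : ℂ)))
      (Ioc 0 k⁻¹) := by
    refine IntegrableOn.congr_fun (f := fun u : ℝ => (u : ℂ) ^ (s - 1) * (-(k : ℂ)))
      ?_ ?_ measurableSet_Ioc
    · exact ((intervalIntegral.intervalIntegrable_cpow' (by simpa using hs0)).mul_const _).1
    · intro u hu
      have hmin : min u⁻¹ k = k := by
        refine min_eq_right ?_
        calc k = (k⁻¹)⁻¹ := (inv_inv k).symm
        _ ≤ u⁻¹ := inv_anti₀ hu.1 hu.2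
      simp only [hmin, smul_eq_mul]
  have h2 : IntegrableOn (fun u : ℝ => (u : ℂ) ^ (s - 1) • (-((min u⁻¹ k : ℝ) : ℂ)))
      (Ioi k⁻¹) := by
    refine IntegrableOn.congr_fun (f := fun u : ℝ => -((u : ℂ) ^ (s - 2)))
      ?_ ?_ measurableSet_Ioi
    · exact (integrableOn_Ioi_cpow_of_lt (by simp; linarith) hc).neg
    · intro u hu
      have hu0 : (0:ℝ) < u := lt_trans hc hu
      have hmin : min u⁻¹ k = u⁻¹ := by
        refine min_eq_left ?_
        calc u⁻¹ ≤ (k⁻¹)⁻¹ := inv_anti₀ hc (le_of_lt hu)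
        _ = k := inv_inv k
      have hinv : ((u⁻¹ : ℝ) : ℂ) = (u : ℂ) ^ (-1 : ℂ) := by
        rw [cpow_neg_one]; push_cast; ring
      simp only [hmin, smul_eq_mul, hinv, mul_neg, neg_inj]
      rw [← cpow_add _ _ (by exact_mod_cast hu0.ne')]
      ring_nf
  rw [show Ioi (0:ℝ) = Ioc 0 k⁻¹ ∪ Ioi k⁻¹ from (Ioc_union_Ioi_eq_Ioi hc.le).symm]
  exact h1.union h2

open Set in
private lemma payoff_mellin (k : ℝ) (hk : 0 < k) {s : ℂ} (hs0 : 0 < s.re) (hs1 : s.re < 1) :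
    mellin (fun u : ℝ => -((min u⁻¹ k : ℝ) : ℂ)) s = (k : ℂ) ^ (1 - s) / (s * (s - 1)) := by
  have hc : (0:ℝ) < k⁻¹ := inv_pos.mpr hk
  have hs : s ≠ 0 := fun h => by simp [h] at hs0
  have hs1' : s - 1 ≠ 0 := fun h => by
    have : s = 1 := by linear_combination h
    simp [this] at hs1
  have hk0 : (k : ℂ) ≠ 0 := by exact_mod_cast hk.ne'
  have h1 : IntegrableOn (fun u : ℝ => (u : ℂ) ^ (s - 1) • (-((min u⁻¹ k : ℝ) : ℂ)))
      (Ioc 0 k⁻¹) :=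
    (payoff_integrableOn k hk hs0 hs1).mono_set Ioc_subset_Ioi_self
  have h2 : IntegrableOn (fun u : ℝ => (u : ℂ) ^ (s - 1) • (-((min u⁻¹ k : ℝ) : ℂ)))
      (Ioi k⁻¹) :=
    (payoff_integrableOn k hk hs0 hs1).mono_set (Ioi_subset_Ioi hc.le)
  have e1 : ∫ u : ℝ in Ioc 0 k⁻¹, (u : ℂ) ^ (s - 1) • (-((min u⁻¹ k : ℝ) : ℂ))
      = -((k : ℂ) ^ (1 - s)) / s := by
    rw [setIntegral_congr_fun measurableSet_Ioc
      (g := fun u : ℝ => (u : ℂ) ^ (s - 1) * (-(k : ℂ))) ?_ ]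
    · rw [integral_mul_const, ← intervalIntegral.integral_of_le hc.le,
        integral_cpow (Or.inl (by simpa using hs0))]
      have h0 : ((0:ℝ) : ℂ) ^ (s - 1 + 1) = 0 := by
        rw [ofReal_zero, zero_cpow (by simpa using hs)]
      rw [h0, sub_add_cancel]
      have harg : (k : ℂ).arg ≠ Real.pi := by
        rw [Complex.arg_ofReal_of_nonneg hk.le]; exact (Real.pi_ne_zero).symm
      have : ((k⁻¹ : ℝ) : ℂ) ^ s = (k:ℂ) ^ (-s) := by
        push_cast; rw [Complex.inv_cpow _ _ harg, ← cpow_neg]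
      rw [this]
      rw [show (1:ℂ) - s = 1 + (-s) by ring, cpow_add _ _ hk0, cpow_one]
      ring
    · intro u hu
      have hmin : min u⁻¹ k = k := min_eq_right (by
        calc k = (k⁻¹)⁻¹ := (inv_inv k).symm
        _ ≤ u⁻¹ := inv_anti₀ hu.1 hu.2)
      simp only [hmin, smul_eq_mul]
  have e2 : ∫ u : ℝ in Ioi k⁻¹, (u : ℂ) ^ (s - 1) • (-((min u⁻¹ k : ℝ) : ℂ))
      = (k : ℂ) ^ (1 - s) / (s - 1) := by
    rw [setIntegral_congr_fun measurableSet_Ioi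
      (g := fun u : ℝ => -((u : ℂ) ^ (s - 2))) ?_ ]
    · rw [integral_neg, integral_Ioi_cpow_of_lt (by simp; linarith) hc]
      have harg : (k : ℂ).arg ≠ Real.pi := by
        rw [Complex.arg_ofReal_of_nonneg hk.le]; exact (Real.pi_ne_zero).symm
      have : ((k⁻¹ : ℝ) : ℂ) ^ (s - 2 + 1) = (k:ℂ) ^ (-(s-1)) := by
        push_cast
        rw [Complex.inv_cpow _ _ harg, ← cpow_neg, show s - 2 + 1 = s - 1 by ring]
      rw [this, show -(s-1) = 1 - s by ring]
      rw [show s - 2 + 1 = s - 1 by ring]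
      field_simp
    · intro u hu
      have hu0 : (0:ℝ) < u := lt_trans hc hu
      have hmin : min u⁻¹ k = u⁻¹ := min_eq_left (by
        calc u⁻¹ ≤ (k⁻¹)⁻¹ := inv_anti₀ hc (le_of_lt hu)
        _ = k := inv_inv k)
      have hinv : ((u⁻¹ : ℝ) : ℂ) = (u : ℂ) ^ (-1 : ℂ) := by
        rw [cpow_neg_one]; push_cast; ring
      simp only [hmin, smul_eq_mul, hinv, mul_neg, neg_inj]
      rw [← cpow_add _ _ (by exact_mod_cast hu0.ne')]
      ring_nf
  rw [mellin, show Ioi (0:ℝ) = Ioc 0 k⁻¹ ∪ Ioi k⁻¹ from (Ioc_union_Ioi_eq_Ioi hc.le).symm,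
    setIntegral_union (Ioc_disjoint_Ioi le_rfl) measurableSet_Ioi h1 h2, e1, e2]
  field_simp
  ring

open Set in
private lemma payoff_vertical (k w : ℝ) (hk : 0 < k) (hw0 : 0 < w) (hw1 : w < 1) :
    Complex.VerticalIntegrable (mellin (fun u : ℝ => -((min u⁻¹ k : ℝ) : ℂ))) w := by
  unfold Complex.VerticalIntegrable
  have hre : ∀ y : ℝ, ((w : ℂ) + y * I).re = w := by intro y; simp
  have key : ∀ y : ℝ, mellin (fun u : ℝ => -((min u⁻¹ k : ℝ) : ℂ)) ((w:ℂ) + y * I)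
      = (k : ℂ) ^ (1 - ((w:ℂ) + y * I)) / (((w:ℂ) + y * I) * (((w:ℂ) + y * I) - 1)) := by
    intro y
    exact payoff_mellin k hk (by rw [hre]; exact hw0) (by rw [hre]; exact hw1)
  simp_rw [key]
  have hk0 : (k : ℂ) ≠ 0 := by exact_mod_cast hk.ne'
  have hb : (0:ℝ) < 1 - w := by linarith
  have hab : (0:ℝ) < w * (1 - w) := mul_pos hw0 hb
  have hab4 : w * (1 - w) ≤ 1/4 := by nlinarith [sq_nonneg (2*w - 1)]
  have hden : ∀ y : ℝ, ((w:ℂ) + y * I) * (((w:ℂ) + y * I) - 1) ≠ 0 := by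
    intro y
    apply mul_ne_zero
    · intro h
      have := congrArg Complex.re h
      simp at this; exact hw0.ne' this
    · intro h
      have := congrArg Complex.re h
      simp at this; nlinarith [this]
  have hcont : Continuous fun y : ℝ =>
      (k : ℂ) ^ (1 - ((w:ℂ) + y * I)) / (((w:ℂ) + y * I) * (((w:ℂ) + y * I) - 1)) := by
    apply Continuous.div
    · exact (Continuous.const_cpow (by fun_prop) (Or.inl hk0))
    · fun_prop
    · exact hden
  refine Integrable.mono' ((integrable_inv_one_add_sq).const_mul
      (k ^ (1 - w) / (w * (1 - w)))) hcont.aestronglyMeasurable ?_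
  refine Filter.Eventually.of_forall fun y => ?_
  rw [norm_div]
  have hnum : ‖(k : ℂ) ^ (1 - ((w:ℂ) + y * I))‖ = k ^ (1 - w) := by
    rw [Complex.norm_cpow_eq_rpow_re_of_pos hk]
    congr 1; simp
  have hd1 : w * (1 - w) * (1 + y ^ 2) ≤ ‖((w:ℂ) + y * I) * (((w:ℂ) + y * I) - 1)‖ := by
    rw [norm_mul]
    have h1 : ‖(w:ℂ) + y * I‖ = Real.sqrt (w ^ 2 + y ^ 2) := by
      rw [Complex.norm_def, Complex.normSq_apply]
      simp; ring_nf
    have h2 : ‖((w:ℂ) + y * I) - 1‖ = Real.sqrt ((w - 1) ^ 2 + y ^ 2) := by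
      rw [Complex.norm_def, Complex.normSq_apply]
      simp; ring_nf
    rw [h1, h2, ← Real.sqrt_mul (by positivity)]
    rw [show w * (1 - w) * (1 + y ^ 2) =
      Real.sqrt ((w * (1 - w) * (1 + y ^ 2)) ^ 2) from
      (Real.sqrt_sq (by positivity)).symm]
    apply Real.sqrt_le_sqrt
    nlinarith [sq_nonneg y, sq_nonneg (y^2), sq_nonneg (w - (1-w)), hab, hab4,
      mul_nonneg (sq_nonneg y) (sq_nonneg (w - (1-w))),
      mul_nonneg hab.le (sq_nonneg y),
      mul_nonneg hab.le (sq_nonneg (y^2)),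
      mul_le_of_le_one_left (sq_nonneg y) (by linarith : w * (1 - w) ≤ 1),
      mul_le_of_le_one_left (sq_nonneg (y^2)) (by linarith : w * (1 - w) ≤ 1)]
  calc ‖(k : ℂ) ^ (1 - ((w:ℂ) + y * I))‖ / ‖((w:ℂ) + y * I) * (((w:ℂ) + y * I) - 1)‖
      ≤ k ^ (1 - w) / (w * (1 - w) * (1 + y ^ 2)) := by
        rw [hnum]
        apply div_le_div_of_nonneg_left (by positivity) (by positivity) hd1
    _ = k ^ (1 - w) / (w * (1 - w)) * (1 + y ^ 2)⁻¹ := by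
        field_simp

/-- Fourier representation for `0 < w < 1`: for `k > 0` and `x > 0`,
`(1/(2π)) ∫_ℝ x^(w+iλ) k^(-(w-1+iλ)) / ((w+iλ)(w-1+iλ)) dλ = (x-k)⁺ - x = (k-x)⁺ - k`. -/
theorem fourier_mid_payoff (k w : ℝ) (hk : 0 < k) (hw0 : 0 < w) (hw1 : w < 1)
    (x : ℝ) (hx : 0 < x) :
    (1 / (2 * Real.pi) : ℂ) *
      (∫ lam : ℝ, (x : ℂ) ^ ((w : ℂ) + lam * Complex.I) *
        (k : ℂ) ^ (-(((w : ℂ) - 1) + lam * Complex.I)) /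
        ((((w : ℂ) + lam * Complex.I)) * (((w : ℂ) - 1) + lam * Complex.I)))
      = ((max (x - k) 0 - x : ℝ) : ℂ) ∧
    ((max (x - k) 0 - x : ℝ) : ℂ) = ((max (k - x) 0 - k : ℝ) : ℂ) := by
  have hreal : max (x - k) 0 - x = max (k - x) 0 - k := by
    rcases le_total x k with h | h
    · rw [max_eq_right (by linarith), max_eq_left (by linarith)]; ring
    · rw [max_eq_left (by linarith), max_eq_right (by linarith)]; ring
  refine ⟨?_, by exact_mod_cast congrArg (Complex.ofReal) hreal⟩
  set f : ℝ → ℂ := fun u => -((min u⁻¹ k : ℝ) : ℂ) with hf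
  have hx' : (0:ℝ) < x⁻¹ := inv_pos.mpr hx
  have hMC : MellinConvergent f w :=
    payoff_integrableOn k hk (by simpa using hw0) (by simpa using hw1)
  have hV : Complex.VerticalIntegrable (mellin f) w := payoff_vertical k w hk hw0 hw1
  have hcont : ContinuousAt f x⁻¹ := by
    have h1 : ContinuousAt (fun u : ℝ => min u⁻¹ k) x⁻¹ :=
      Filter.Tendsto.min (continuousAt_inv₀ hx'.ne') tendsto_const_nhds
    exact (Complex.continuous_ofReal.continuousAt.comp h1).neg
  have hinv := mellinInv_mellin_eq w f hx' hMC hV hcont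
  -- identify LHS integral with mellinInv
  have harg : (x : ℂ).arg ≠ Real.pi := by
    rw [Complex.arg_ofReal_of_nonneg hx.le]; exact (Real.pi_ne_zero).symm
  have hkey : ∀ lam : ℝ,
      (x : ℂ) ^ ((w : ℂ) + lam * Complex.I) *
        (k : ℂ) ^ (-(((w : ℂ) - 1) + lam * Complex.I)) /
        ((((w : ℂ) + lam * Complex.I)) * (((w : ℂ) - 1) + lam * Complex.I))
      = ((x⁻¹ : ℝ) : ℂ) ^ (-((w : ℂ) + lam * Complex.I)) •
          mellin f ((w : ℂ) + lam * Complex.I) := by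
    intro lam
    have hre : ((w : ℂ) + lam * I).re = w := by simp
    rw [payoff_mellin k hk (by rw [hre]; exact hw0) (by rw [hre]; exact hw1)]
    have hx1 : ((x⁻¹ : ℝ) : ℂ) ^ (-((w : ℂ) + lam * Complex.I))
        = (x : ℂ) ^ ((w : ℂ) + lam * Complex.I) := by
      push_cast
      rw [Complex.inv_cpow _ _ harg, ← cpow_neg, neg_neg]
    have hk1 : (k : ℂ) ^ (1 - ((w : ℂ) + lam * Complex.I))
        = (k : ℂ) ^ (-(((w : ℂ) - 1) + lam * Complex.I)) := by
      congr 1; ring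
    rw [hx1, hk1, smul_eq_mul, show ((w : ℂ) + lam * I) - 1 = ((w : ℂ) - 1) + lam * I by ring]
    ring
  calc (1 / (2 * Real.pi) : ℂ) *
      (∫ lam : ℝ, (x : ℂ) ^ ((w : ℂ) + lam * Complex.I) *
        (k : ℂ) ^ (-(((w : ℂ) - 1) + lam * Complex.I)) /
        ((((w : ℂ) + lam * Complex.I)) * (((w : ℂ) - 1) + lam * Complex.I)))
      = mellinInv w (mellin f) x⁻¹ := by
        rw [mellinInv]
        rw [show ∀ z : ℂ, (1 / (2 * Real.pi) : ℝ) • z = (1 / (2 * Real.pi) : ℂ) * z from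
          fun z => by rw [Complex.real_smul]; push_cast; ring_nf]
        congr 1
        exact integral_congr_ae (Filter.Eventually.of_forall hkey)
    _ = f x⁻¹ := hinv
    _ = ((max (x - k) 0 - x : ℝ) : ℂ) := by
        simp only [hf, inv_inv]
        norm_cast
        rcases le_total x k with h | h
        · rw [min_eq_left h, max_eq_right (by linarith)]; ring
        · rw [min_eq_right h, max_eq_left (by linarith)]; ring
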